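/- For every integer n ≥ 2, the Hosoya polynomial of the Mycielskian of the path P_n is H(μ(P_n), x) = (4n+1)x + (1/2)(n² + 11n − 2)x² + (n² − 2n)x³ + (1/2)(n² − 5n + 6)x⁴. -/

import Mathlib

/-!
For connected `G` with at least two vertices, every distance in `μ(G)` is an explicit function of
a distance in `G`, truncated at `4` between original vertices and at `3` between an original and a
shadow vertex. Explicit walks give the upper bounds; the lower bounds hold because this function
changes by at most one along every edge of `μ(G)`. Counting ordered pairs, `d(μ(G), k)` is then a
combination of the numbers of pairs of `G` at distance exactly `k` and at least `k`, which for a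
path on `m` vertices are `2 (m - k)` and `(m - k) (m - k + 1)`.
-/

open SimpleGraph Polynomial Finset

/-- The Mycielskian `μ(G)` of a simple graph `G`. Vertices `Sum.inl v` are the original
vertices `v_i`, vertices `Sum.inr (Sum.inl v)` are the shadow vertices `u_i`, and
`Sum.inr (Sum.inr ())` is the apex vertex `w`.  Edges: the edges of `G`, the edges `w u_i`,
and the edges `u_i v_j`, `u_j v_i` for every edge `v_i v_j` of `G`. -/
def mycielskian {V : Type*} (G : SimpleGraph V) : SimpleGraph (V ⊕ V ⊕ Unit) :=
  SimpleGraph.fromRel (fun a b =>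
    match a, b with
    | Sum.inl a, Sum.inl b => G.Adj a b
    | Sum.inl a, Sum.inr (Sum.inl b) => G.Adj a b
    | Sum.inr (Sum.inl _), Sum.inr (Sum.inr _) => True
    | _, _ => False)

/-- `distCount G k` is `d(G,k)`, the number of unordered pairs of distinct vertices of `G`
whose graph distance is exactly `k`. -/
noncomputable def distCount {V : Type*} (G : SimpleGraph V) (k : ℕ) : ℕ :=
  Nat.card {e : Sym2 V // ¬ e.IsDiag ∧ Sym2.lift ⟨G.dist, fun _ _ => G.dist_comm⟩ e = k}

/-- The Hosoya polynomial `H(G,x) = Σ_{k=1}^{D(G)} d(G,k) x^k` (with rational coefficients). -/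
noncomputable def hosoya {V : Type*} (G : SimpleGraph V) : Polynomial ℚ :=
  ∑ k ∈ Finset.Icc 1 G.diam, (distCount G k : ℚ) • Polynomial.X ^ k

/-- The Wiener index `W(G)`: the sum of distances over all unordered pairs of distinct
vertices (the diagonal contributes `0`, so we may sum over ordered pairs and halve). -/
noncomputable def wiener {V : Type*} (G : SimpleGraph V) [Fintype V] : ℚ :=
  (∑ u : V, ∑ v : V, (G.dist u v : ℚ)) / 2

/-- The Hyper-Wiener index `WW(G) = (1/2) Σ_{{u,v}} (d(u,v)² + d(u,v))`. -/
noncomputable def hyperWiener {V : Type*} (G : SimpleGraph V) [Fintype V] : ℚ :=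
  (∑ u : V, ∑ v : V, ((G.dist u v : ℚ) ^ 2 + (G.dist u v : ℚ))) / 4

/-- The TSZ index `TSZ(G) = (1/6) Σ_{{u,v}} d³ + (1/2) Σ_{{u,v}} d² + (1/3) Σ_{{u,v}} d`. -/
noncomputable def tszIndex {V : Type*} (G : SimpleGraph V) [Fintype V] : ℚ :=
  (∑ u : V, ∑ v : V, (G.dist u v : ℚ) ^ 3) / 12
    + (∑ u : V, ∑ v : V, (G.dist u v : ℚ) ^ 2) / 4
    + (∑ u : V, ∑ v : V, (G.dist u v : ℚ)) / 6

/-- The Harary index `Har(G) = Σ_{{u,v}} 1/d(u,v)` (diagonal terms are `0⁻¹ = 0`). -/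
noncomputable def harary {V : Type*} (G : SimpleGraph V) [Fintype V] : ℚ :=
  (∑ u : V, ∑ v : V, ((G.dist u v : ℚ))⁻¹) / 2

/-- The closeness `C(G) = Σ_u Σ_{v ≠ u} 2^{-d(u,v)}` over ordered pairs of distinct vertices. -/
noncomputable def closeness {V : Type*} (G : SimpleGraph V) [Fintype V] : ℚ :=
  letI := Classical.decEq V
  ∑ u : V, ∑ v : V, if v = u then 0 else ((1 : ℚ) / 2) ^ (G.dist u v)

/-- `σ_{uv}`: the number of shortest paths (walks of length `dist u v`) from `u` to `v`. -/
noncomputable def numSP {V : Type*} (G : SimpleGraph V) (u v : V) : ℕ :=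
  Nat.card {p : G.Walk u v // p.length = G.dist u v}

/-- `σ_{uv}(w)`: the number of shortest paths from `u` to `v` passing through `w`. -/
noncomputable def numSPthrough {V : Type*} (G : SimpleGraph V) (w u v : V) : ℕ :=
  Nat.card {p : G.Walk u v // p.length = G.dist u v ∧ w ∈ p.support}

/-- The betweenness centrality `B_w = Σ_{{u,v}, u ≠ w ≠ v} σ_{uv}(w)/σ_{uv}` of a vertex `w`,
summed over unordered pairs of distinct vertices (ordered pairs, halved). -/
noncomputable def btwVertex {V : Type*} (G : SimpleGraph V) [Fintype V] (w : V) : ℚ :=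
  letI := Classical.decEq V
  (∑ u : V, ∑ v : V,
    if u ≠ v ∧ u ≠ w ∧ v ≠ w then (numSPthrough G w u v : ℚ) / (numSP G u v) else 0) / 2

/-- The betweenness centrality of a graph: `B⁻(G) = (1/N) Σ_w B_w`. -/
noncomputable def btw {V : Type*} (G : SimpleGraph V) [Fintype V] : ℚ :=
  (∑ w : V, btwVertex G w) / (Fintype.card V)

/-- The star graph `S_n`: center `0` joined to the `n` leaves `1, …, n`. -/
def starGraph (n : ℕ) : SimpleGraph (Fin (n + 1)) :=
  SimpleGraph.fromRel (fun a _ => a = 0)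

/-- The join `G₁ ⊕ G₂` of two graphs on disjoint vertex sets: all edges of `G₁`, all edges
of `G₂`, and all edges between `V(G₁)` and `V(G₂)`. -/
def joinGraph {V₁ V₂ : Type*} (G₁ : SimpleGraph V₁) (G₂ : SimpleGraph V₂) :
    SimpleGraph (V₁ ⊕ V₂) :=
  SimpleGraph.fromRel (fun a b =>
    match a, b with
    | Sum.inl a, Sum.inl b => G₁.Adj a b
    | Sum.inr a, Sum.inr b => G₂.Adj a b
    | Sum.inl _, Sum.inr _ => True
    | _, _ => False)


namespace SimpleGraph

variable {V : Type*} {G : SimpleGraph V}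

lemma Reachable.le_dist_of_forall_adj_le (f : V → V → ℕ) (hself : ∀ a, f a a = 0)
    (hadj : ∀ a a' b, G.Adj a a' → f a b ≤ f a' b + 1) {a b : V} (hr : G.Reachable a b) :
    f a b ≤ G.dist a b := by
  obtain ⟨p, hp⟩ := hr.exists_walk_length_eq_dist
  rw [← hp]
  clear hp hr
  induction p with
  | nil => simp [hself]
  | cons h p ih => exact (hadj _ _ _ h).trans (by rw [Walk.length_cons]; omega)

lemma Connected.dist_le_dist_add_one_of_adj (hG : G.Connected) {i k : V} (h : G.Adj i k)
    (j : V) : G.dist i j ≤ G.dist k j + 1 := by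
  have := hG.dist_triangle (u := i) (v := k) (w := j)
  rw [dist_eq_one_iff_adj.mpr h] at this
  omega

lemma pathGraph_dist_le_of_add_eq {m d : ℕ} :
    ∀ {i j : Fin m}, i.val + d = j.val → (pathGraph m).dist i j ≤ d := by
  induction d with
  | zero =>
    intro i j h
    simp [Fin.ext (by omega : i.val = j.val)]
  | succ d ih =>
    intro i j h
    let j' : Fin m := ⟨j - 1, by omega⟩
    have hadj : (pathGraph m).Adj j' j := pathGraph_adj.mpr (.inl (by simp [j']; omega))
    calc (pathGraph m).dist i j ≤ (pathGraph m).dist i j' + (pathGraph m).dist j' j :=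
          (pathGraph_preconnected m i j').dist_triangle_left j
      _ ≤ d + 1 := by
        rw [dist_eq_one_iff_adj.mpr hadj]
        exact Nat.add_le_add_right (ih (by simp [j']; omega)) 1

lemma pathGraph_dist {m : ℕ} (i j : Fin m) : (pathGraph m).dist i j = Nat.dist i j := by
  refine le_antisymm ?_ ((pathGraph_preconnected m i j).le_dist_of_forall_adj_le
    (fun i j : Fin m => Nat.dist i j) (by simp) fun a a' b h => ?_)
  · rcases le_total i.val j.val with h | h
    · exact pathGraph_dist_le_of_add_eq (by simp [Nat.dist]; omega)
    · rw [dist_comm, Nat.dist_comm]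
      exact pathGraph_dist_le_of_add_eq (by simp [Nat.dist]; omega)
  · rw [pathGraph_adj] at h
    simp only [Nat.dist]
    omega

end SimpleGraph

section Mycielskian

open SimpleGraph

variable {V : Type*} {G : SimpleGraph V} {i j k : V}

lemma mycielskian_adj_inl_inl : (mycielskian G).Adj (.inl i) (.inl j) ↔ G.Adj i j := by
  simpa [mycielskian, G.adj_comm j i] using fun h => h.ne

lemma mycielskian_adj_inl_shadow : (mycielskian G).Adj (.inl i) (.inr (.inl j)) ↔ G.Adj i j := by
  simp [mycielskian]

lemma mycielskian_adj_shadow_apex (u : Unit) :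
    (mycielskian G).Adj (.inr (.inl i)) (.inr (.inr u)) := by
  simp [mycielskian]

variable (G) in
def mycielskianInl : G →g mycielskian G := ⟨Sum.inl, mycielskian_adj_inl_inl.mpr⟩

lemma mycielskian_connected (hV : ∀ i, ∃ k, G.Adj i k) : (mycielskian G).Connected := by
  refine (connected_iff_exists_forall_reachable _).mpr
    ⟨.inr (.inr ()), fun a => Reachable.symm ?_⟩
  rcases a with i | i | ⟨⟩
  · obtain ⟨k, hk⟩ := hV i
    exact (mycielskian_adj_inl_shadow.mpr hk).reachable.trans
      (mycielskian_adj_shadow_apex ()).reachable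
  · exact (mycielskian_adj_shadow_apex ()).reachable
  · rfl

lemma dist_mycielskian_inl_apex_le (hV : ∀ i, ∃ k, G.Adj i k) (i : V) (u : Unit) :
    (mycielskian G).dist (.inl i) (.inr (.inr u)) ≤ 2 := by
  obtain ⟨k, hk⟩ := hV i
  exact dist_le
    (.cons (mycielskian_adj_inl_shadow.mpr hk) (.cons (mycielskian_adj_shadow_apex u) .nil))

lemma dist_mycielskian_inl_inl_le (hG : G.Connected) (hV : ∀ i, ∃ k, G.Adj i k) (i j : V) :
    (mycielskian G).dist (.inl i) (.inl j) ≤ min (G.dist i j) 4 := by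
  obtain ⟨p, hp⟩ := hG.exists_walk_length_eq_dist i j
  obtain ⟨k, hk⟩ := hV i
  obtain ⟨l, hl⟩ := hV j
  refine le_min ((dist_le (p.map (mycielskianInl G))).trans_eq (by simp [hp])) ?_
  exact dist_le (.cons (mycielskian_adj_inl_shadow.mpr hk)
    (.cons (mycielskian_adj_shadow_apex ()) (.cons (mycielskian_adj_shadow_apex ()).symm
      (.cons (mycielskian_adj_inl_shadow.mpr hl).symm .nil))))

lemma dist_mycielskian_inl_shadow_le_dist (hG : G.Connected) (hij : i ≠ j) :
    (mycielskian G).dist (.inl i) (.inr (.inl j)) ≤ G.dist i j := by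
  obtain ⟨p, hp⟩ := hG.exists_walk_length_eq_dist j i
  have hnil : ¬p.Nil := p.not_nil_of_ne hij.symm
  have hsnd : (mycielskian G).Adj (mycielskianInl G p.snd) (.inr (.inl j)) :=
    mycielskian_adj_inl_shadow.mpr (p.adj_snd hnil).symm
  refine (dist_le ((p.tail.map (mycielskianInl G)).reverse.concat hsnd)).trans_eq ?_
  rw [Walk.length_concat, Walk.length_reverse, Walk.length_map, Walk.length_tail_add_one hnil, hp,
    G.dist_comm]

variable [DecidableEq V]

lemma dist_mycielskian_inl_shadow_le (hG : G.Connected) (hV : ∀ i, ∃ k, G.Adj i k) (i j : V) :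
    (mycielskian G).dist (.inl i) (.inr (.inl j)) ≤ if i = j then 2 else min (G.dist i j) 3 := by
  obtain ⟨k, hk⟩ := hV i
  split_ifs with hij
  · subst hij
    exact dist_le (.cons (mycielskian_adj_inl_inl.mpr hk)
      (.cons (mycielskian_adj_inl_shadow.mpr hk.symm) .nil))
  · refine le_min (dist_mycielskian_inl_shadow_le_dist hG hij) ?_
    exact dist_le (.cons (mycielskian_adj_inl_shadow.mpr hk)
      (.cons (mycielskian_adj_shadow_apex ()) (.cons (mycielskian_adj_shadow_apex ()).symm .nil)))

variable (G) in
noncomputable def mycielskianDist : V ⊕ V ⊕ Unit → V ⊕ V ⊕ Unit → ℕ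
  | .inl i, .inl j => min (G.dist i j) 4
  | .inl i, .inr (.inl j) | .inr (.inl i), .inl j => if i = j then 2 else min (G.dist i j) 3
  | .inr (.inl i), .inr (.inl j) => if i = j then 0 else 2
  | .inl _, .inr (.inr _) | .inr (.inr _), .inl _ => 2
  | .inr (.inl _), .inr (.inr _) | .inr (.inr _), .inr (.inl _) => 1
  | .inr (.inr _), .inr (.inr _) => 0

lemma mycielskianDist_le_add_one_of_adj_inl (hG : G.Connected) (h : G.Adj i k)
    (b : V ⊕ V ⊕ Unit) :
    mycielskianDist G (.inl i) b ≤ mycielskianDist G (.inl k) b + 1 ∧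
      mycielskianDist G (.inl i) b ≤ mycielskianDist G (.inr (.inl k)) b + 1 ∧
      mycielskianDist G (.inr (.inl k)) b ≤ mycielskianDist G (.inl i) b + 1 := by
  have near : ∀ j, G.dist i j ≤ G.dist k j + 1 ∧ G.dist k j ≤ G.dist i j + 1 ∧
      (G.dist i j ≠ 0 ∨ G.dist k j ≠ 0) := fun j =>
    ⟨hG.dist_le_dist_add_one_of_adj h j, hG.dist_le_dist_add_one_of_adj h.symm j, by
      by_contra! h0
      rw [hG.dist_eq_zero_iff, hG.dist_eq_zero_iff] at h0
      exact h.ne (h0.1.trans h0.2.symm)⟩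
  rcases b with j | j | -
  -- with `i = j` read as `G.dist i j = 0`, each case is linear arithmetic on the two distances
  all_goals simp only [mycielskianDist, ← hG.dist_eq_zero_iff]
  · have := near j
    split_ifs <;> omega
  · have := near j
    split_ifs <;> omega
  · omega

lemma mycielskianDist_le_add_one_of_adj_apex (hG : G.Connected) (b : V ⊕ V ⊕ Unit) :
    mycielskianDist G (.inr (.inl k)) b ≤ mycielskianDist G (.inr (.inr ())) b + 1 ∧
      mycielskianDist G (.inr (.inr ())) b ≤ mycielskianDist G (.inr (.inl k)) b + 1 := by
  rcases b with j | j | -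
  all_goals simp only [mycielskianDist, ← hG.dist_eq_zero_iff]
  all_goals (try split_ifs) <;> omega

lemma dist_mycielskian_shadow_shadow_le (i j : V) :
    (mycielskian G).dist (.inr (.inl i)) (.inr (.inl j)) ≤ if i = j then 0 else 2 := by
  split_ifs with hij
  · simp [hij]
  · exact dist_le
      (.cons (mycielskian_adj_shadow_apex ()) (.cons (mycielskian_adj_shadow_apex ()).symm .nil))

lemma mycielskianDist_self (a : V ⊕ V ⊕ Unit) : mycielskianDist G a a = 0 := by
  rcases a with i | i | - <;> simp [mycielskianDist]

lemma mycielskianDist_comm (a b : V ⊕ V ⊕ Unit) :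
    mycielskianDist G a b = mycielskianDist G b a := by
  rcases a with i | i | - <;> rcases b with j | j | - <;>
    simp [mycielskianDist, G.dist_comm, eq_comm]

lemma mycielskianDist_le_add_one_of_adj (hG : G.Connected) {a a' : V ⊕ V ⊕ Unit}
    (h : (mycielskian G).Adj a a') (b : V ⊕ V ⊕ Unit) :
    mycielskianDist G a b ≤ mycielskianDist G a' b + 1 := by
  rcases a with i | i | ⟨⟩ <;> rcases a' with k | k | ⟨⟩
  · exact (mycielskianDist_le_add_one_of_adj_inl hG (mycielskian_adj_inl_inl.mp h) b).1
  · exact (mycielskianDist_le_add_one_of_adj_inl hG (mycielskian_adj_inl_shadow.mp h) b).2.1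
  · simp [mycielskian] at h
  · exact (mycielskianDist_le_add_one_of_adj_inl hG (mycielskian_adj_inl_shadow.mp h.symm) b).2.2
  · simp [mycielskian] at h
  · exact (mycielskianDist_le_add_one_of_adj_apex hG b).1
  · simp [mycielskian] at h
  · exact (mycielskianDist_le_add_one_of_adj_apex hG b).2
  · exact absurd h (mycielskian G).irrefl

lemma dist_mycielskian_le (hG : G.Connected) (hV : ∀ i, ∃ k, G.Adj i k)
    (a b : V ⊕ V ⊕ Unit) :
    (mycielskian G).dist a b ≤ mycielskianDist G a b := by
  rcases a with i | i | ⟨⟩ <;> rcases b with j | j | ⟨⟩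
  · exact dist_mycielskian_inl_inl_le hG hV i j
  · exact dist_mycielskian_inl_shadow_le hG hV i j
  · exact dist_mycielskian_inl_apex_le hV i ()
  · rw [dist_comm, mycielskianDist_comm]
    exact dist_mycielskian_inl_shadow_le hG hV j i
  · exact dist_mycielskian_shadow_shadow_le i j
  · exact (dist_eq_one_iff_adj.mpr (mycielskian_adj_shadow_apex ())).le
  · rw [dist_comm]
    exact dist_mycielskian_inl_apex_le hV j ()
  · exact (dist_eq_one_iff_adj.mpr (mycielskian_adj_shadow_apex ()).symm).le
  · simp [mycielskianDist]

theorem dist_mycielskian [Nontrivial V] (hG : G.Connected) (a b : V ⊕ V ⊕ Unit) :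
    (mycielskian G).dist a b = mycielskianDist G a b := by
  have hV := hG.preconnected.exists_adj_of_nontrivial
  exact le_antisymm (dist_mycielskian_le hG hV a b)
    (((mycielskian_connected hV).preconnected a b).le_dist_of_forall_adj_le _
      mycielskianDist_self (fun _ _ b h => mycielskianDist_le_add_one_of_adj hG h b))

lemma mycielskianDist_le_four (a b : V ⊕ V ⊕ Unit) : mycielskianDist G a b ≤ 4 := by
  rcases a with i | i | - <;> rcases b with j | j | - <;> simp only [mycielskianDist] <;>
    (try split_ifs) <;> omega

lemma ediam_mycielskian_le_four [Nontrivial V] (hG : G.Connected) :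
    (mycielskian G).ediam ≤ 4 := by
  classical
  refine ediam_le_of_edist_le fun a b => ?_
  have hV := hG.preconnected.exists_adj_of_nontrivial
  rw [← ((mycielskian_connected hV).preconnected a b).coe_dist_eq_edist, dist_mycielskian hG]
  exact_mod_cast mycielskianDist_le_four a b

end Mycielskian

namespace SimpleGraph

variable {V : Type*} [Fintype V] (G : SimpleGraph V)

noncomputable def distPairCount (k : ℕ) : ℕ := #{p : V × V | G.dist p.1 p.2 = k}

noncomputable def distGePairCount (k : ℕ) : ℕ := #{p : V × V | k ≤ G.dist p.1 p.2}

lemma distPairCount_eq_sum (k : ℕ) :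
    G.distPairCount k = ∑ u, ∑ v, if G.dist u v = k then 1 else 0 := by
  rw [distPairCount, card_filter, Fintype.sum_prod_type]

lemma distGePairCount_eq_sum (k : ℕ) :
    G.distGePairCount k = ∑ u, ∑ v, if k ≤ G.dist u v then 1 else 0 := by
  rw [distGePairCount, card_filter, Fintype.sum_prod_type]

lemma distGePairCount_eq_add (k : ℕ) :
    G.distGePairCount k = G.distPairCount k + G.distGePairCount (k + 1) := by
  simp only [distGePairCount_eq_sum, distPairCount_eq_sum, ← sum_add_distrib]
  refine sum_congr rfl fun u _ => sum_congr rfl fun v _ => ?_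
  split_ifs <;> omega

lemma Connected.distPairCount_zero {G : SimpleGraph V} (hG : G.Connected) :
    G.distPairCount 0 = Fintype.card V := by
  classical
  simp [distPairCount_eq_sum, hG.dist_eq_zero_iff]

lemma two_mul_distCount {k : ℕ} (hk : k ≠ 0) : 2 * distCount G k = G.distPairCount k := by
  classical
  let H : SimpleGraph V := fromRel fun u v => G.dist u v = k
  have hedges : distCount G k = #H.edgeFinset := by
    rw [distCount, Nat.card_eq_fintype_card, edgeFinset_card]
    refine Fintype.card_congr (Equiv.subtypeEquivRight fun e => ?_)
    induction e using Sym2.ind with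
    | _ u v =>
      have : G.dist v u = G.dist u v := dist_comm
      simp [H, this]
  rw [hedges, ← sum_degrees_eq_twice_card_edges, distPairCount_eq_sum]
  refine sum_congr rfl fun u _ => ?_
  rw [← card_neighborFinset_eq_degree, neighborFinset_eq_filter, card_filter]
  refine sum_congr rfl fun v _ => if_congr ?_ rfl rfl
  have : G.dist v u = G.dist u v := dist_comm
  simp only [H, fromRel_adj, this, or_self, and_iff_right_iff_imp]
  rintro h rfl
  simp [← h] at hk

lemma sum_range_ite_le_dist {d : ℕ} (hd : d ≠ 0) (m : ℕ) :
    ∑ i ∈ range m, (if d ≤ Nat.dist i m then 1 else 0) = m + 1 - d := by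
  rw [← card_filter, ← card_range (m + 1 - d)]
  congr 1
  ext i
  rw [mem_filter, mem_range, mem_range, Nat.dist]
  omega

lemma sum_range_sum_range_ite_le_dist {d : ℕ} (hd : d ≠ 0) (m : ℕ) :
    ∑ i ∈ range m, ∑ j ∈ range m, (if d ≤ Nat.dist i j then 1 else 0) =
      (m - d) * (m + 1 - d) := by
  induction m with
  | zero => simp
  | succ m ih =>
    simp only [sum_range_succ, sum_add_distrib, ih, sum_range_ite_le_dist hd, Nat.dist_self]
    simp_rw [Nat.dist_comm m, sum_range_ite_le_dist hd, nonpos_iff_eq_zero, hd, if_false]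
    rcases le_or_gt d m with h | h
    · obtain ⟨t, rfl⟩ := Nat.exists_eq_add_of_le h
      rw [show d + t + 1 + 1 - d = t + 2 by omega, show d + t + 1 - d = t + 1 by omega,
        Nat.add_sub_cancel_left]
      ring
    · rw [Nat.sub_eq_zero_of_le h.le, Nat.sub_eq_zero_of_le h]
      simp

lemma pathGraph_distGePairCount (m : ℕ) {d : ℕ} (hd : d ≠ 0) :
    (pathGraph m).distGePairCount d = (m - d) * (m + 1 - d) := by
  rw [distGePairCount_eq_sum, ← sum_range_sum_range_ite_le_dist hd]
  simp only [pathGraph_dist]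
  rw [← Fin.sum_univ_eq_sum_range
    (fun i => ∑ j ∈ range m, if d ≤ Nat.dist i j then 1 else 0)]
  simp only [← Fin.sum_univ_eq_sum_range (fun j => if d ≤ Nat.dist _ j then 1 else 0)]

lemma pathGraph_distPairCount (m : ℕ) {d : ℕ} (hd : d ≠ 0) :
    (pathGraph m).distPairCount d = 2 * (m - d) := by
  have := (pathGraph m).distGePairCount_eq_add d
  rw [pathGraph_distGePairCount m hd, pathGraph_distGePairCount m d.add_one_ne_zero] at this
  rcases le_or_gt d m with h | h
  · obtain ⟨t, rfl⟩ := Nat.exists_eq_add_of_le h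
    simp only [show d + t + 1 - d = t + 1 by omega, show d + t + 1 - (d + 1) = t by omega,
      show d + t - (d + 1) = t - 1 by omega, Nat.add_sub_cancel_left] at this ⊢
    rcases t with _ | t
    · simpa using this.symm
    · rw [Nat.add_sub_cancel] at this
      linarith
  · simp only [show m - d = 0 by omega, show m + 1 - d = 0 by omega,
      show m - (d + 1) = 0 by omega] at this ⊢
    simpa using this.symm

end SimpleGraph

section Counting

open SimpleGraph

variable {V : Type*} [Fintype V] {G : SimpleGraph V}

lemma sum_sum_mycielskian_dist [Nontrivial V] (hG : G.Connected) (φ : ℕ → ℕ) :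
    ∑ a, ∑ b, φ ((mycielskian G).dist a b) =
      ∑ i, ∑ j, (φ (min (G.dist i j) 4) +
        2 * φ (if G.dist i j = 0 then 2 else min (G.dist i j) 3) +
        φ (if G.dist i j = 0 then 0 else 2)) + Fintype.card V * (2 * φ 1 + 2 * φ 2) + φ 0 := by
  classical
  simp only [dist_mycielskian hG, Fintype.sum_sum_type, mycielskianDist, Fintype.sum_unique,
    ← hG.dist_eq_zero_iff]
  simp only [sum_add_distrib, ← mul_sum, sum_const, card_univ, smul_eq_mul]
  ring

lemma distPairCount_mycielskian_one [Nontrivial V] (hG : G.Connected) :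
    (mycielskian G).distPairCount 1 = 3 * G.distPairCount 1 + 2 * Fintype.card V := by
  classical
  rw [distPairCount_eq_sum, sum_sum_mycielskian_dist hG (fun x => if x = 1 then 1 else 0),
    distPairCount_eq_sum]
  have (x : ℕ) : (if min x 4 = 1 then 1 else 0) +
      2 * (if (if x = 0 then 2 else min x 3) = 1 then 1 else 0) +
      (if (if x = 0 then 0 else 2) = 1 then 1 else 0) = 3 * if x = 1 then 1 else 0 := by
    grind
  simp only [this, ← mul_sum]
  norm_num
  ring

lemma distPairCount_mycielskian_two [Nontrivial V] (hG : G.Connected) :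
    (mycielskian G).distPairCount 2 =
      3 * G.distPairCount 2 + G.distGePairCount 1 + 4 * Fintype.card V := by
  classical
  rw [distPairCount_eq_sum, sum_sum_mycielskian_dist hG (fun x => if x = 2 then 1 else 0),
    show 4 * Fintype.card V = 2 * G.distPairCount 0 + 2 * Fintype.card V by
      rw [hG.distPairCount_zero]; ring,
    distPairCount_eq_sum, distPairCount_eq_sum, distGePairCount_eq_sum]
  have (x : ℕ) : (if min x 4 = 2 then 1 else 0) +
      2 * (if (if x = 0 then 2 else min x 3) = 2 then 1 else 0) +
      (if (if x = 0 then 0 else 2) = 2 then 1 else 0) =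
        3 * (if x = 2 then 1 else 0) + (if 1 ≤ x then 1 else 0) + 2 * if x = 0 then 1 else 0 := by
    grind
  simp only [this, ← mul_sum, sum_add_distrib]
  norm_num
  ring

lemma distPairCount_mycielskian_three [Nontrivial V] (hG : G.Connected) :
    (mycielskian G).distPairCount 3 = G.distPairCount 3 + 2 * G.distGePairCount 3 := by
  classical
  rw [distPairCount_eq_sum, sum_sum_mycielskian_dist hG (fun x => if x = 3 then 1 else 0),
    distPairCount_eq_sum, distGePairCount_eq_sum]
  have (x : ℕ) : (if min x 4 = 3 then 1 else 0) +
      2 * (if (if x = 0 then 2 else min x 3) = 3 then 1 else 0) +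
      (if (if x = 0 then 0 else 2) = 3 then 1 else 0) =
        (if x = 3 then 1 else 0) + 2 * if 3 ≤ x then 1 else 0 := by
    grind
  simp only [this, ← mul_sum, sum_add_distrib]
  norm_num

lemma distPairCount_mycielskian_four [Nontrivial V] (hG : G.Connected) :
    (mycielskian G).distPairCount 4 = G.distGePairCount 4 := by
  classical
  rw [distPairCount_eq_sum, sum_sum_mycielskian_dist hG (fun x => if x = 4 then 1 else 0),
    distGePairCount_eq_sum]
  have (x : ℕ) : (if min x 4 = 4 then 1 else 0) +
      2 * (if (if x = 0 then 2 else min x 3) = 4 then 1 else 0) +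
      (if (if x = 0 then 0 else 2) = 4 then 1 else 0) = if 4 ≤ x then 1 else 0 := by
    grind
  simp only [this]
  norm_num

end Counting

section Hosoya

open SimpleGraph

variable {V : Type*} {G : SimpleGraph V}

lemma distCount_eq_zero_of_diam_lt (h : G.ediam ≠ ⊤) {k : ℕ} (hk : G.diam < k) :
    distCount G k = 0 := by
  rw [distCount, Nat.card_eq_zero]
  left
  rw [isEmpty_subtype]
  intro e
  induction e using Sym2.ind with
  | _ u v =>
    rintro ⟨-, huv⟩
    have huv : G.dist u v = k := huv
    have := G.dist_le_diam h (u := u) (v := v)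
    omega

lemma hosoya_eq_sum_of_ediam_le {D : ℕ} (h : G.ediam ≤ D) :
    hosoya G = ∑ k ∈ Icc 1 D, (distCount G k : ℚ) • X ^ k := by
  have hne : G.ediam ≠ ⊤ := ne_top_of_le_ne_top (ENat.natCast_ne_top D) h
  refine sum_subset (Icc_subset_Icc le_rfl (ENat.toNat_le_of_le_natCast h)) fun k hk hk' => ?_
  rw [distCount_eq_zero_of_diam_lt hne (by simp only [mem_Icc] at hk hk'; omega)]
  simp

lemma distCount_eq_distPairCount_div_two [Fintype V] {k : ℕ} (hk : k ≠ 0) :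
    (distCount G k : ℚ) = G.distPairCount k / 2 := by
  rw [← two_mul_distCount G hk]
  push_cast
  ring

end Hosoya

section PathGraph

open SimpleGraph

variable {n : ℕ}

lemma distCount_mycielskian_pathGraph_one (hn : 1 ≤ n) :
    (distCount (mycielskian (pathGraph (n + 1))) 1 : ℚ) = ((4 * n + 1 : ℕ) : ℚ) := by
  obtain ⟨t, rfl⟩ := Nat.exists_eq_add_of_le' hn
  rw [distCount_eq_distPairCount_div_two one_ne_zero,
    distPairCount_mycielskian_one (pathGraph_connected _), pathGraph_distPairCount _ one_ne_zero,
    Fintype.card_fin, Nat.add_sub_cancel]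
  push_cast
  ring

lemma distCount_mycielskian_pathGraph_two (hn : 1 ≤ n) :
    (distCount (mycielskian (pathGraph (n + 1))) 2 : ℚ) = ((n : ℚ) ^ 2 + 11 * n - 2) / 2 := by
  obtain ⟨t, rfl⟩ := Nat.exists_eq_add_of_le' hn
  rw [distCount_eq_distPairCount_div_two two_ne_zero,
    distPairCount_mycielskian_two (pathGraph_connected _), pathGraph_distPairCount _ two_ne_zero,
    pathGraph_distGePairCount _ one_ne_zero, Fintype.card_fin, show t + 1 + 1 - 2 = t by omega,
    Nat.add_sub_cancel, Nat.add_sub_cancel]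
  push_cast
  ring

lemma distCount_mycielskian_pathGraph_three (hn : 2 ≤ n) :
    (distCount (mycielskian (pathGraph (n + 1))) 3 : ℚ) = (n : ℚ) ^ 2 - 2 * n := by
  obtain ⟨t, rfl⟩ := Nat.exists_eq_add_of_le' hn
  rw [distCount_eq_distPairCount_div_two three_ne_zero,
    distPairCount_mycielskian_three (pathGraph_connected _),
    pathGraph_distPairCount _ three_ne_zero, pathGraph_distGePairCount _ three_ne_zero,
    show t + 2 + 1 - 3 = t by omega, show t + 2 + 1 + 1 - 3 = t + 1 by omega]
  push_cast
  ring

lemma distCount_mycielskian_pathGraph_four (hn : 2 ≤ n) :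
    (distCount (mycielskian (pathGraph (n + 1))) 4 : ℚ) = ((n : ℚ) ^ 2 - 5 * n + 6) / 2 := by
  obtain ⟨t, rfl⟩ := Nat.exists_eq_add_of_le' hn
  rw [distCount_eq_distPairCount_div_two four_ne_zero,
    distPairCount_mycielskian_four (pathGraph_connected _),
    pathGraph_distGePairCount _ four_ne_zero, show t + 2 + 1 - 4 = t - 1 by omega,
    show t + 2 + 1 + 1 - 4 = t by omega, Nat.sub_one_mul, Nat.cast_sub (Nat.le_mul_self t)]
  push_cast
  ring

end PathGraph

/-- For `n ≥ 2`, the path `P_n` (on `n+1` vertices) satisfies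
`H(μ(P_n), x) = (4n+1)x + (1/2)(n²+11n-2)x² + (n²-2n)x³ + (1/2)(n²-5n+6)x⁴`. -/
theorem stmt_13 (n : ℕ) (hn : 2 ≤ n) :
    hosoya (mycielskian (SimpleGraph.pathGraph (n + 1))) =
      Polynomial.C ((4 * n + 1 : ℕ) : ℚ) * Polynomial.X +
        Polynomial.C (((n : ℚ) ^ 2 + 11 * n - 2) / 2) * Polynomial.X ^ 2 +
        Polynomial.C ((n : ℚ) ^ 2 - 2 * n) * Polynomial.X ^ 3 +
        Polynomial.C (((n : ℚ) ^ 2 - 5 * n + 6) / 2) * Polynomial.X ^ 4 := by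
  have hn' : 1 ≤ n := by omega
  have : Nontrivial (Fin (n + 1)) := Fin.nontrivial_iff_two_le.mpr (by omega)
  rw [hosoya_eq_sum_of_ediam_le (ediam_mycielskian_le_four (pathGraph_connected n)),
    show Icc 1 4 = {1, 2, 3, 4} by rfl]
  simp only [sum_insert, mem_insert, mem_singleton, sum_singleton, Nat.reduceEqDiff, or_self,
    not_false_eq_true, distCount_mycielskian_pathGraph_one hn',
    distCount_mycielskian_pathGraph_two hn',
    distCount_mycielskian_pathGraph_three hn, distCount_mycielskian_pathGraph_four hn,
    smul_eq_C_mul, pow_one]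
  ring
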